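/- Let Φ ∈ C¹_♯(Y_d)^d vanish nowhere, let ρ ∈ C¹_♯(Y_d) be nonnegative, let r ∈ C¹_♯(Y_d) be positive everywhere, and let μ be an invariant probability measure for the flow of b := ρΦ such that c := ∫_{Y_d} (ρ(y)/r(y)) dμ(y) > 0. Then the probability measure μ' on Y_d defined by dμ'(y) := c⁻¹ (ρ(y)/r(y)) dμ(y) is invariant for the flow associated with the vector field rΦ. -/

import Mathlib

/-!
Write `q = ρ / r`, so that `ρΦ = q • rΦ`: the flow `X` of `ρΦ` moves along the orbits of the
flow `X'` of `rΦ` with speed `q`. For smooth periodic `ψ`, the map `s ↦ ∫ ψ (X' u (X s y)) dμ` is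
constant by invariance of `μ`, and its derivative at `s = 0` is `∫ q · (rΦ · ∇ψ)(X' u y) dμ`,
which is also the derivative of `u ↦ ∫ q ψ (X' u y) dμ`. Hence `q μ` is `X'`-invariant against
smooth test functions; mollification extends this to continuous ones, and normalising by
`c = ∫ q dμ` gives `μ'`.
-/

open MeasureTheory Filter Matrix

noncomputable section

/-- A function on `ℝ^d` is `ℤ^d`-periodic. -/
def ZdPeriodic {d : ℕ} {E : Type*} (f : (Fin d → ℝ) → E) : Prop :=
  ∀ (κ : Fin d → ℤ) (x : Fin d → ℝ), f (x + fun i => (κ i : ℝ)) = f x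

/-- The unit cube `[0,1)^d`, a fundamental domain for the torus `Y_d = ℝ^d/ℤ^d`. -/
def unitCube (d : ℕ) : Set (Fin d → ℝ) := {x | ∀ i, x i ∈ Set.Ico (0 : ℝ) 1}

/-- `X` is the global flow of the vector field `b`: `∂X/∂t(t,x) = b(X(t,x))`, `X(0,x) = x`. -/
def IsFlowOf {d : ℕ} (b : (Fin d → ℝ) → (Fin d → ℝ))
    (X : ℝ → (Fin d → ℝ) → (Fin d → ℝ)) : Prop :=
  ∀ x : Fin d → ℝ, X 0 x = x ∧ ∀ t : ℝ, HasDerivAt (fun s => X s x) (b (X t x)) t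

/-- A measure `μ` on the torus `Y_d` (identified with a measure on `ℝ^d` carried by the unit
cube) is invariant for the flow `X`: `∫ ψ(X(t,y)) dμ = ∫ ψ dμ` for all `t` and all continuous
`ℤ^d`-periodic `ψ`. -/
def FlowInvariant {d : ℕ} (X : ℝ → (Fin d → ℝ) → (Fin d → ℝ))
    (μ : Measure (Fin d → ℝ)) : Prop :=
  ∀ (t : ℝ) (ψ : (Fin d → ℝ) → ℝ), Continuous ψ → ZdPeriodic ψ →
    ∫ y, ψ (X t y) ∂μ = ∫ y, ψ y ∂μ

/-- Herman's rotation set `C_b = {∫ b dμ : μ invariant probability measure for the flow}`. -/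
def rotationSet {d : ℕ} (b : (Fin d → ℝ) → (Fin d → ℝ))
    (X : ℝ → (Fin d → ℝ) → (Fin d → ℝ)) : Set (Fin d → ℝ) :=
  {ζ | ∃ μ : Measure (Fin d → ℝ), IsProbabilityMeasure μ ∧ μ (unitCube d)ᶜ = 0 ∧
        FlowInvariant X μ ∧ ζ = ∫ y, b y ∂μ}

/-- The gradient of a scalar function on `ℝ^d`. -/
def grad {d : ℕ} (ψ : (Fin d → ℝ) → ℝ) (y : Fin d → ℝ) : Fin d → ℝ :=
  fun i => fderiv ℝ ψ y (Pi.single i 1)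

open scoped NNReal ENNReal ContDiff Topology Convolution

theorem exists_add_intCast_mem_Icc {d : ℕ} (x : Fin d → ℝ) :
    ∃ κ : Fin d → ℤ, (x + fun i => (κ i : ℝ)) ∈ Set.Icc 0 1 := by
  refine ⟨fun i => -⌊x i⌋, fun i => ?_, fun i => ?_⟩ <;>
    simp only [Pi.add_apply, Int.cast_neg, ← sub_eq_add_neg, Int.self_sub_floor, Pi.zero_apply,
      Pi.one_apply]
  exacts [Int.fract_nonneg _, (Int.fract_lt_one _).le]

namespace ZdPeriodic

variable {d : ℕ} {F : Type*} [NormedAddCommGroup F]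

theorem exists_norm_le {f : (Fin d → ℝ) → F} (hp : ZdPeriodic f) (hf : Continuous f) :
    ∃ C, ∀ x, ‖f x‖ ≤ C := by
  obtain ⟨C, hC⟩ := (isCompact_Icc (a := (0 : Fin d → ℝ)) (b := 1)).exists_bound_of_continuousOn
    hf.continuousOn
  refine ⟨C, fun x => ?_⟩
  obtain ⟨κ, hκ⟩ := exists_add_intCast_mem_Icc x
  exact hp κ x ▸ hC _ hκ

theorem integrable {f : (Fin d → ℝ) → F} (hp : ZdPeriodic f) (hf : Continuous f)
    {μ : Measure (Fin d → ℝ)} [IsFiniteMeasure μ] : Integrable f μ := by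
  obtain ⟨C, hC⟩ := hp.exists_norm_le hf
  exact (integrable_const C).mono' hf.aestronglyMeasurable (.of_forall hC)

variable [NormedSpace ℝ F]

protected theorem fderiv {f : (Fin d → ℝ) → F} (hp : ZdPeriodic f) :
    ZdPeriodic (fderiv ℝ f) := fun κ x => by
  rw [← fderiv_comp_add_right]
  simp only [hp κ]

theorem exists_lipschitzWith {f : (Fin d → ℝ) → F} (hp : ZdPeriodic f) (hf : ContDiff ℝ 1 f) :
    ∃ K, LipschitzWith K f := by
  obtain ⟨C, hC⟩ := hp.fderiv.exists_norm_le (hf.continuous_fderiv one_ne_zero)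
  exact ⟨C.toNNReal, lipschitzWith_of_nnnorm_fderiv_le (hf.differentiable one_ne_zero)
    fun x => by simpa [← NNReal.coe_le_coe] using (hC x).trans (le_max_left C 0)⟩

theorem convolution {f : (Fin d → ℝ) → F} (hp : ZdPeriodic f) (φ : (Fin d → ℝ) → ℝ) :
    ZdPeriodic (φ ⋆[ContinuousLinearMap.lsmul ℝ ℝ, volume] f) := fun κ x => by
  simp only [convolution_def, add_sub_right_comm, hp κ]

theorem exists_norm_fderiv_apply_le {ψ : (Fin d → ℝ) → ℝ}
    (hψp : ZdPeriodic ψ) (hψ : ContDiff ℝ 1 ψ) {b : (Fin d → ℝ) → (Fin d → ℝ)}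
    (hbp : ZdPeriodic b) (hb : Continuous b) : ∃ C, ∀ w, ‖fderiv ℝ ψ w (b w)‖ ≤ C :=
  exists_norm_le (fun κ x => by simp only [hψp.fderiv κ x, hbp κ x])
    ((hψ.continuous_fderiv one_ne_zero).clm_apply hb)

variable [CompleteSpace F]

theorem exists_seq_contDiff_tendsto {f : (Fin d → ℝ) → F} (hp : ZdPeriodic f)
    (hf : Continuous f) {C : ℝ} (hC : ∀ x, ‖f x‖ ≤ C) :
    ∃ g : ℕ → (Fin d → ℝ) → F, (∀ n, ContDiff ℝ ∞ (g n) ∧ ZdPeriodic (g n) ∧ ∀ x, ‖g n x‖ ≤ C) ∧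
      ∀ x, Tendsto (g · x) atTop (𝓝 (f x)) := by
  have hε (n : ℕ) : (0 : ℝ) < 1 / (n + 1) := Nat.one_div_pos_of_nat
  let φ (n : ℕ) : ContDiffBump (0 : Fin d → ℝ) := ⟨_, _, half_pos (hε n), half_lt_self (hε n)⟩
  refine ⟨fun n => (φ n).normed volume ⋆[ContinuousLinearMap.lsmul ℝ ℝ, volume] f,
    fun n => ⟨?_, hp.convolution _, fun x => ?_⟩,
    ContDiffBump.convolution_tendsto_right_of_continuous tendsto_one_div_add_atTop_nhds_zero_nat hf⟩
  · exact (φ n).hasCompactSupport_normed.contDiff_convolution_left _ (φ n).contDiff_normed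
      hf.locallyIntegrable
  · simpa using dist_convolution_le (z₀ := 0) ((norm_nonneg _).trans (hC 0))
      (φ n).support_normed_eq.subset (φ n).nonneg_normed (φ n).integral_normed
      hf.aestronglyMeasurable fun y _ => by simpa using hC y

end ZdPeriodic

theorem LipschitzWith.hasDerivAt_comp_of_hasDerivAt_comp {E F : Type*} [NormedAddCommGroup E]
    [NormedSpace ℝ E] [NormedAddCommGroup F] [NormedSpace ℝ F] {g : E → F} {K : ℝ≥0}
    (hg : LipschitzWith K g) {γ β : ℝ → E} {v : E} {D : F} {s : ℝ} (hγ : HasDerivAt γ v s)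
    (hβ : HasDerivAt β v s) (hs : γ s = β s) (hgβ : HasDerivAt (fun t => g (β t)) D s) :
    HasDerivAt (fun t => g (γ t)) D s := by
  have hsmall : (fun t => γ t - β t) =o[𝓝 s] fun t => t - s := by
    have h0 : HasDerivAt (fun t => γ t - β t) (v - v) s := hγ.sub hβ
    simpa [hs] using hasDerivAt_iff_isLittleO.mp h0
  have hdiff : HasDerivAt (fun t => g (γ t) - g (β t)) 0 s := by
    rw [hasDerivAt_iff_isLittleO]
    simpa [hs] using (Asymptotics.isBigO_of_le' (c := K) _ fun t => by
      simpa [dist_eq_norm] using hg.dist_le_mul (γ t) (β t)).trans_isLittleO hsmall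
  convert hgβ.add hdiff using 1
  · ext t
    simp
  · rw [add_zero]

namespace IsFlowOf

variable {d : ℕ} {b : (Fin d → ℝ) → (Fin d → ℝ)} {X : ℝ → (Fin d → ℝ) → (Fin d → ℝ)}
  {K : ℝ≥0}

theorem continuous_curve (hX : IsFlowOf b X) (x : Fin d → ℝ) : Continuous fun t => X t x :=
  continuous_iff_continuousAt.mpr fun t => ((hX x).2 t).continuousAt

theorem eq_of_hasDerivAt (hb : LipschitzWith K b) (hX : IsFlowOf b X) {f : ℝ → Fin d → ℝ}
    (hf : ∀ t, HasDerivAt f (b (f t)) t) : f = fun t => X t (f 0) :=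
  ODE_solution_unique_univ (v := fun _ => b) (s := fun _ => Set.univ) (t₀ := 0)
    (fun _ => hb.lipschitzOnWith) (fun t => ⟨hf t, trivial⟩)
    (fun t => ⟨(hX (f 0)).2 t, trivial⟩) (hX (f 0)).1.symm

theorem apply_add (hb : LipschitzWith K b) (hX : IsFlowOf b X) (t s : ℝ) (x : Fin d → ℝ) :
    X (t + s) x = X t (X s x) := by
  have hshift : ∀ u, HasDerivAt (fun u => X (u + s) x) (b (X (u + s) x)) u := fun u =>
    ((hX x).2 (u + s)).comp_add_const u s
  simpa using congrFun (eq_of_hasDerivAt hb hX hshift) t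

theorem apply_add_intCast (hb : LipschitzWith K b) (hbp : ZdPeriodic b) (hX : IsFlowOf b X)
    (t : ℝ) (x : Fin d → ℝ) (κ : Fin d → ℤ) :
    X t (x + fun i => (κ i : ℝ)) = X t x + fun i => (κ i : ℝ) := by
  have htrans : ∀ u, HasDerivAt (fun u => X u x + fun i => (κ i : ℝ))
      (b (X u x + fun i => (κ i : ℝ))) u := fun u => by
    simpa [hbp κ] using ((hX x).2 u).add_const (fun i => (κ i : ℝ))
  simpa [(hX x).1] using (congrFun (eq_of_hasDerivAt hb hX htrans) t).symm

theorem comp_neg (hX : IsFlowOf b X) : IsFlowOf (fun y => -b y) fun t => X (-t) :=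
  fun x => ⟨by simpa using (hX x).1, fun t => by
    simpa [Function.comp_def] using ((hX x).2 (-t)).scomp t (hasDerivAt_neg t)⟩

theorem dist_le_of_nonneg (hb : LipschitzWith K b) (hX : IsFlowOf b X) {t : ℝ} (ht : 0 ≤ t)
    (x y : Fin d → ℝ) : dist (X t x) (X t y) ≤ dist x y * Real.exp (K * t) := by
  simpa [(hX x).1, (hX y).1] using dist_le_of_trajectories_ODE (v := fun _ => b) (a := 0)
    (fun _ => hb) (hX.continuous_curve x).continuousOn
    (fun s _ => ((hX x).2 s).hasDerivWithinAt) (hX.continuous_curve y).continuousOn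
    (fun s _ => ((hX y).2 s).hasDerivWithinAt) le_rfl t ⟨ht, le_rfl⟩

theorem lipschitzWith (hb : LipschitzWith K b) (hX : IsFlowOf b X) (t : ℝ) :
    LipschitzWith (Real.exp (K * |t|)).toNNReal (X t) := by
  refine LipschitzWith.of_dist_le_mul fun x y => ?_
  rw [Real.coe_toNNReal _ (Real.exp_nonneg _), mul_comm]
  rcases le_total 0 t with ht | ht
  · simpa [abs_of_nonneg ht] using hX.dist_le_of_nonneg hb ht x y
  · simpa [abs_of_nonpos ht] using
      hX.comp_neg.dist_le_of_nonneg hb.neg (neg_nonneg.mpr ht) x y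

theorem hasDerivAt_comp (hX : IsFlowOf b X) {ψ : (Fin d → ℝ) → ℝ} (hψ : Differentiable ℝ ψ)
    (x : Fin d → ℝ) (t : ℝ) :
    HasDerivAt (fun s => ψ (X s x)) (fderiv ℝ ψ (X t x) (b (X t x))) t :=
  (hψ _).hasFDerivAt.comp_hasDerivAt t ((hX x).2 t)

/-- To first order at `s`, `γ` is the orbit `s' ↦ X (a * (s' - s)) (γ s)`, and the Lipschitz map
`ψ ∘ X t` only sees that first-order jet: no differentiability of `X t` in space is needed. -/
theorem hasDerivAt_comp_of_hasDerivAt_smul (hb : LipschitzWith K b) (hX : IsFlowOf b X)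
    {γ : ℝ → Fin d → ℝ} {a s : ℝ} (hγ : HasDerivAt γ (a • b (γ s)) s)
    {ψ : (Fin d → ℝ) → ℝ} {Kψ : ℝ≥0} (hψ : LipschitzWith Kψ ψ) {t D : ℝ}
    (hD : HasDerivAt (fun τ => ψ (X τ (γ s))) D t) :
    HasDerivAt (fun s' => ψ (X t (γ s'))) (a * D) s := by
  have htime : HasDerivAt (fun s' => a * (s' - s)) a s := by
    simpa using ((hasDerivAt_id s).sub_const s).const_mul a
  have horbit : HasDerivAt (fun s' => X (a * (s' - s)) (γ s)) (a • b (γ s)) s := by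
    simpa [(hX (γ s)).1, Function.comp_def] using ((hX (γ s)).2 _).scomp s htime
  refine (hψ.comp (hX.lipschitzWith hb t)).hasDerivAt_comp_of_hasDerivAt_comp hγ horbit
    (by simp [(hX (γ s)).1]) ?_
  have hD' : HasDerivAt (fun τ => ψ (X τ (γ s))) D (t + a * (s - s)) := by simpa using hD
  simpa [Function.comp_def, ← hX.apply_add hb] using hD'.scomp s (htime.const_add t)

end IsFlowOf

theorem hasDerivAt_integral_of_continuous_of_norm_le {α : Type*} [TopologicalSpace α]
    [MeasurableSpace α] [OpensMeasurableSpace α] {μ : Measure α} [IsFiniteMeasure μ]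
    {F F' : ℝ → α → ℝ} {s₀ C C' : ℝ} (hF : ∀ s, Continuous (F s)) (hF₀ : ∀ y, ‖F s₀ y‖ ≤ C)
    (hF' : Continuous (F' s₀)) (hF'_le : ∀ s y, ‖F' s y‖ ≤ C')
    (hderiv : ∀ s y, HasDerivAt (F · y) (F' s y) s) :
    HasDerivAt (fun s => ∫ y, F s y ∂μ) (∫ y, F' s₀ y ∂μ) s₀ :=
  (hasDerivAt_integral_of_dominated_loc_of_deriv_le (s := Set.univ) univ_mem
    (.of_forall fun s => (hF s).aestronglyMeasurable)
    ((integrable_const C).mono' (hF s₀).aestronglyMeasurable (.of_forall hF₀))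
    hF'.aestronglyMeasurable (.of_forall fun y s _ => hF'_le s y) (integrable_const C')
    (.of_forall fun y s _ => hderiv s y)).2

namespace FlowInvariant

variable {d : ℕ} {X : ℝ → (Fin d → ℝ) → (Fin d → ℝ)} {μ : Measure (Fin d → ℝ)}

theorem smul (hinv : FlowInvariant X μ) (c : ℝ≥0∞) : FlowInvariant X (c • μ) :=
  fun t ψ hψ hψp => by simp only [integral_smul_measure, hinv t ψ hψ hψp]

theorem of_contDiff [IsFiniteMeasure μ] (hX : ∀ t, Continuous (X t))
    (h : ∀ t (ψ : (Fin d → ℝ) → ℝ), ContDiff ℝ ∞ ψ → ZdPeriodic ψ →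
      ∫ y, ψ (X t y) ∂μ = ∫ y, ψ y ∂μ) :
    FlowInvariant X μ := by
  intro t ψ hψ hψp
  obtain ⟨C, hC⟩ := hψp.exists_norm_le hψ
  obtain ⟨g, hg, hlim⟩ := hψp.exists_seq_contDiff_tendsto hψ hC
  have hconv (T : (Fin d → ℝ) → (Fin d → ℝ)) (hT : Continuous T) :
      Tendsto (fun n => ∫ y, g n (T y) ∂μ) atTop (𝓝 (∫ y, ψ (T y) ∂μ)) :=
    tendsto_integral_of_dominated_convergence (fun _ => C)
      (fun n => ((hg n).1.continuous.comp hT).aestronglyMeasurable) (integrable_const C)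
      (fun n => .of_forall fun y => (hg n).2.2 (T y)) (.of_forall fun y => hlim (T y))
  exact tendsto_nhds_unique ((hconv _ (hX t)).congr fun n => h t _ (hg n).1 (hg n).2.1)
    (hconv id continuous_id)

end FlowInvariant

section WithDensity

variable {α E : Type*} [MeasurableSpace α] [NormedAddCommGroup E] [NormedSpace ℝ E]
  {μ : Measure α} {f : α → ℝ}

theorem integral_withDensity_ofReal (hf : Measurable f) (hf0 : 0 ≤ᵐ[μ] f) (g : α → E) :
    ∫ y, g y ∂μ.withDensity (fun y => ENNReal.ofReal (f y)) = ∫ y, f y • g y ∂μ := by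
  rw [integral_withDensity_eq_integral_toReal_smul hf.ennreal_ofReal
    (.of_forall fun _ => ENNReal.ofReal_lt_top)]
  exact integral_congr_ae (hf0.mono fun y hy => by simp [ENNReal.toReal_ofReal hy])

theorem isProbabilityMeasure_inv_smul_withDensity_ofReal (hf : Integrable f μ)
    (hf0 : 0 ≤ᵐ[μ] f) (hpos : 0 < ∫ y, f y ∂μ) :
    IsProbabilityMeasure
      ((ENNReal.ofReal (∫ y, f y ∂μ))⁻¹ • μ.withDensity fun y => ENNReal.ofReal (f y)) :=
  ⟨by rw [Measure.smul_apply, withDensity_apply _ MeasurableSet.univ, setLIntegral_univ,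
    ← ofReal_integral_eq_lintegral_ofReal hf hf0, smul_eq_mul,
    ENNReal.inv_mul_cancel (ENNReal.ofReal_pos.mpr hpos).ne' ENNReal.ofReal_ne_top]⟩

end WithDensity

section TimeChange

variable {d : ℕ} {b : (Fin d → ℝ) → (Fin d → ℝ)} {q : (Fin d → ℝ) → ℝ}
  {X X' : ℝ → (Fin d → ℝ) → (Fin d → ℝ)} {K K' : ℝ≥0} {μ : Measure (Fin d → ℝ)}
  [IsFiniteMeasure μ] {ψ : (Fin d → ℝ) → ℝ}

theorem IsFlowOf.hasDerivAt_integral_mul_comp (hb : LipschitzWith K b) (hbp : ZdPeriodic b)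
    (hX' : IsFlowOf b X') (hq : Continuous q) (hqp : ZdPeriodic q) (hψ : ContDiff ℝ 1 ψ)
    (hψp : ZdPeriodic ψ) (t : ℝ) :
    HasDerivAt (fun u => ∫ y, q y * ψ (X' u y) ∂μ)
      (∫ y, q y * fderiv ℝ ψ (X' t y) (b (X' t y)) ∂μ) t := by
  obtain ⟨Cq, hCq⟩ := hqp.exists_norm_le hq
  obtain ⟨Cψ, hCψ⟩ := hψp.exists_norm_le hψ.continuous
  obtain ⟨CL, hCL⟩ := hψp.exists_norm_fderiv_apply_le hψ hbp hb.continuous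
  have hX'c (s : ℝ) : Continuous (X' s) := (hX'.lipschitzWith hb s).continuous
  exact hasDerivAt_integral_of_continuous_of_norm_le
    (fun s => hq.mul (hψ.continuous.comp (hX'c s))) (fun y => norm_mul_le_of_le (hCq y) (hCψ _))
    (hq.mul (((hψ.continuous_fderiv one_ne_zero).clm_apply hb.continuous).comp (hX'c t)))
    (fun s y => norm_mul_le_of_le (hCq y) (hCL _))
    (fun s y => (hX'.hasDerivAt_comp (hψ.differentiable one_ne_zero) y s).const_mul (q y))

theorem FlowInvariant.integral_mul_fderiv_comp_flow_eq_zero (hinv : FlowInvariant X μ)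
    (hb : LipschitzWith K b) (hbp : ZdPeriodic b) (hqb : LipschitzWith K' fun y => q y • b y)
    (hX : IsFlowOf (fun y => q y • b y) X) (hX' : IsFlowOf b X') (hq : Continuous q)
    (hqp : ZdPeriodic q) (hψ : ContDiff ℝ 1 ψ) (hψp : ZdPeriodic ψ) (u : ℝ) :
    ∫ y, q y * fderiv ℝ ψ (X' u y) (b (X' u y)) ∂μ = 0 := by
  obtain ⟨Cq, hCq⟩ := hqp.exists_norm_le hq
  obtain ⟨Cψ, hCψ⟩ := hψp.exists_norm_le hψ.continuous
  obtain ⟨CL, hCL⟩ := hψp.exists_norm_fderiv_apply_le hψ hbp hb.continuous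
  obtain ⟨Kψ, hψK⟩ := hψp.exists_lipschitzWith hψ
  have hXc (s : ℝ) : Continuous (X s) := (hX.lipschitzWith hqb s).continuous
  have hX'c : Continuous (X' u) := (hX'.lipschitzWith hb u).continuous
  have hLc : Continuous fun w => fderiv ℝ ψ w (b w) :=
    (hψ.continuous_fderiv one_ne_zero).clm_apply hb.continuous
  have hψX'c : Continuous fun w => ψ (X' u w) := hψ.continuous.comp hX'c
  have hψX'p : ZdPeriodic fun w => ψ (X' u w) := fun κ x => by
    simp only [hX'.apply_add_intCast hb hbp u x κ, hψp κ]
  have hderiv := hasDerivAt_integral_of_continuous_of_norm_le (μ := μ) (s₀ := 0)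
    (F := fun s y => ψ (X' u (X s y)))
    (F' := fun s y => q (X s y) * fderiv ℝ ψ (X' u (X s y)) (b (X' u (X s y))))
    (fun s => hψX'c.comp (hXc s)) (fun y => hCψ _)
    ((hq.comp (hXc 0)).mul ((hLc.comp hX'c).comp (hXc 0)))
    (fun s y => norm_mul_le_of_le (hCq _) (hCL _))
    (fun s y => hX'.hasDerivAt_comp_of_hasDerivAt_smul hb ((hX y).2 s) hψK
      (hX'.hasDerivAt_comp (hψ.differentiable one_ne_zero) _ u))
  have hconst : (fun s => ∫ y, ψ (X' u (X s y)) ∂μ) = fun _ => ∫ y, ψ (X' u y) ∂μ :=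
    funext fun s => hinv s _ hψX'c hψX'p
  rw [hconst] at hderiv
  simpa [(hX _).1] using hderiv.unique (hasDerivAt_const (0 : ℝ) _)

theorem FlowInvariant.integral_mul_comp_flow_eq_of_contDiff (hinv : FlowInvariant X μ)
    (hb : LipschitzWith K b) (hbp : ZdPeriodic b) (hqb : LipschitzWith K' fun y => q y • b y)
    (hX : IsFlowOf (fun y => q y • b y) X) (hX' : IsFlowOf b X') (hq : Continuous q)
    (hqp : ZdPeriodic q) (hψ : ContDiff ℝ 1 ψ) (hψp : ZdPeriodic ψ) (t : ℝ) :
    ∫ y, q y * ψ (X' t y) ∂μ = ∫ y, q y * ψ y ∂μ := by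
  have hderiv := hX'.hasDerivAt_integral_mul_comp (μ := μ) hb hbp hq hqp hψ hψp
  simpa [(hX' _).1] using is_const_of_deriv_eq_zero (fun s => (hderiv s).differentiableAt)
    (fun s => (hderiv s).deriv.trans
      (hinv.integral_mul_fderiv_comp_flow_eq_zero hb hbp hqb hX hX' hq hqp hψ hψp s)) t 0

theorem FlowInvariant.withDensity_ofReal (hinv : FlowInvariant X μ)
    (hb : LipschitzWith K b) (hbp : ZdPeriodic b) (hqb : LipschitzWith K' fun y => q y • b y)
    (hX : IsFlowOf (fun y => q y • b y) X) (hX' : IsFlowOf b X') (hq : Continuous q)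
    (hqp : ZdPeriodic q) (hq0 : ∀ y, 0 ≤ q y) :
    FlowInvariant X' (μ.withDensity fun y => ENNReal.ofReal (q y)) := by
  have : IsFiniteMeasure (μ.withDensity fun y => ENNReal.ofReal (q y)) :=
    isFiniteMeasure_withDensity_ofReal (hqp.integrable hq).2
  refine .of_contDiff (fun t => (hX'.lipschitzWith hb t).continuous) fun t ψ hψ hψp => ?_
  simp only [integral_withDensity_ofReal hq.measurable (.of_forall hq0), smul_eq_mul]
  exact hinv.integral_mul_comp_flow_eq_of_contDiff hb hbp hqb hX hX' hq hqp
    (hψ.of_le (by exact_mod_cast le_top)) hψp t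

end TimeChange

theorem invariant_measure_change_of_density_general {d : ℕ}
    (Φ : (Fin d → ℝ) → (Fin d → ℝ)) (hΦ : ContDiff ℝ 1 Φ) (hΦper : ZdPeriodic Φ)
    (ρ : (Fin d → ℝ) → ℝ) (hρ : ContDiff ℝ 1 ρ) (hρper : ZdPeriodic ρ) (hρ0 : ∀ y, 0 ≤ ρ y)
    (r : (Fin d → ℝ) → ℝ) (hr : ContDiff ℝ 1 r) (hrper : ZdPeriodic r) (hrpos : ∀ y, 0 < r y)
    (X : ℝ → (Fin d → ℝ) → (Fin d → ℝ)) (hX : IsFlowOf (fun y => ρ y • Φ y) X)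
    (X' : ℝ → (Fin d → ℝ) → (Fin d → ℝ)) (hX' : IsFlowOf (fun y => r y • Φ y) X')
    (μ : Measure (Fin d → ℝ)) (hμ : IsProbabilityMeasure μ)
    (hinv : FlowInvariant X μ)
    (hc : 0 < ∫ y, ρ y / r y ∂μ) :
    IsProbabilityMeasure
      ((ENNReal.ofReal (∫ y, ρ y / r y ∂μ))⁻¹ •
        μ.withDensity fun y => ENNReal.ofReal (ρ y / r y)) ∧
    FlowInvariant X'
      ((ENNReal.ofReal (∫ y, ρ y / r y ∂μ))⁻¹ •
        μ.withDensity fun y => ENNReal.ofReal (ρ y / r y)) := by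
  set q : (Fin d → ℝ) → ℝ := fun y => ρ y / r y
  have hq : Continuous q := hρ.continuous.div hr.continuous fun y => (hrpos y).ne'
  have hqp : ZdPeriodic q := fun κ x => by simp only [q, hρper κ x, hrper κ x]
  have hq0 (y) : 0 ≤ q y := div_nonneg (hρ0 y) (hrpos y).le
  have hbp : ZdPeriodic fun y => r y • Φ y := fun κ x => by simp only [hrper κ x, hΦper κ x]
  have hρΦp : ZdPeriodic fun y => ρ y • Φ y := fun κ x => by simp only [hρper κ x, hΦper κ x]
  obtain ⟨K, hb⟩ := hbp.exists_lipschitzWith (hr.smul hΦ)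
  obtain ⟨K', hqb⟩ := hρΦp.exists_lipschitzWith (hρ.smul hΦ)
  have hρΦ : (fun y => ρ y • Φ y) = fun y => q y • r y • Φ y :=
    funext fun y => by rw [smul_smul, div_mul_cancel₀ _ (hrpos y).ne']
  rw [hρΦ] at hX hqb
  exact ⟨isProbabilityMeasure_inv_smul_withDensity_ofReal
      (hqp.integrable hq) (.of_forall hq0) hc,
    (hinv.withDensity_ofReal hb hbp hqb hX hX' hq hqp hq0).smul _⟩

/-- If `μ` is an invariant probability measure for the flow of `b = ρΦ` and
`c := ∫ ρ/r dμ > 0` (with `r` positive), then `dμ' := c⁻¹ (ρ/r) dμ` defines a probability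
measure which is invariant for the flow associated with `rΦ`. -/
theorem invariant_measure_change_of_density {d : ℕ} (hd : 1 ≤ d)
    (Φ : (Fin d → ℝ) → (Fin d → ℝ)) (hΦ : ContDiff ℝ 1 Φ) (hΦper : ZdPeriodic Φ)
    (hΦne : ∀ y, Φ y ≠ 0)
    (ρ : (Fin d → ℝ) → ℝ) (hρ : ContDiff ℝ 1 ρ) (hρper : ZdPeriodic ρ) (hρ0 : ∀ y, 0 ≤ ρ y)
    (r : (Fin d → ℝ) → ℝ) (hr : ContDiff ℝ 1 r) (hrper : ZdPeriodic r) (hrpos : ∀ y, 0 < r y)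
    (X : ℝ → (Fin d → ℝ) → (Fin d → ℝ)) (hX : IsFlowOf (fun y => ρ y • Φ y) X)
    (X' : ℝ → (Fin d → ℝ) → (Fin d → ℝ)) (hX' : IsFlowOf (fun y => r y • Φ y) X')
    (μ : Measure (Fin d → ℝ)) (hμ : IsProbabilityMeasure μ) (hμc : μ (unitCube d)ᶜ = 0)
    (hinv : FlowInvariant X μ)
    (hc : 0 < ∫ y, ρ y / r y ∂μ) :
    IsProbabilityMeasure
      ((ENNReal.ofReal (∫ y, ρ y / r y ∂μ))⁻¹ •
        μ.withDensity fun y => ENNReal.ofReal (ρ y / r y)) ∧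
    FlowInvariant X'
      ((ENNReal.ofReal (∫ y, ρ y / r y ∂μ))⁻¹ •
        μ.withDensity fun y => ENNReal.ofReal (ρ y / r y)) :=
  invariant_measure_change_of_density_general Φ hΦ hΦper ρ hρ hρper hρ0 r hr hrper hrpos X hX X' hX'
    μ hμ hinv hc
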